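/- Let V, W be finite-dimensional real vector spaces, E ⊆ V and E' ⊆ W closed convex cones, φ* : V → W and φ_* : W → V linear with φ_* ∘ φ* = id_V, φ*(E) ⊆ E', φ_*(E') ⊆ E. Let S = E^∨ ⊆ V*, S' = (E')^∨ ⊆ W*, nb : V* → W* the dual of φ_*. Suppose φ_* is surjective. If c ∈ V* is such that nb(c) spans an extremal ray of S', then c spans an extremal ray of S. -/
import Mathlib


/-- `c` spans an extremal ray `ℝ₊·c` of the cone `S`. -/
def IsExtremalRayGen {X : Type*} [AddCommGroup X] [Module ℝ X] (S : Set X) (c : X) : Prop :=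
  c ≠ 0 ∧ c ∈ S ∧
    ∀ v ∈ S, ∀ w ∈ S, (∃ t : ℝ, 0 ≤ t ∧ v + w = t • c) →
      (∃ t : ℝ, 0 ≤ t ∧ v = t • c) ∧ (∃ t : ℝ, 0 ≤ t ∧ w = t • c)

theorem extremal_of_nb_extremal {V W : Type*}
    [NormedAddCommGroup V] [NormedSpace ℝ V] [FiniteDimensional ℝ V]
    [NormedAddCommGroup W] [NormedSpace ℝ W] [FiniteDimensional ℝ W]
    (E : ConvexCone ℝ V) (hE : IsClosed (E : Set V))
    (E' : ConvexCone ℝ W) (hE' : IsClosed (E' : Set W))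
    (pull : V →ₗ[ℝ] W) (push : W →ₗ[ℝ] V)
    (hid : push ∘ₗ pull = LinearMap.id)
    (hpull : ∀ D ∈ E, pull D ∈ E') (hpush : ∀ D' ∈ E', push D' ∈ E)
    (hsurj : Function.Surjective push)
    (S : Set (Module.Dual ℝ V)) (hS : S = {c | ∀ D ∈ E, 0 ≤ c D})
    (S' : Set (Module.Dual ℝ W)) (hS' : S' = {c' | ∀ D' ∈ E', 0 ≤ c' D'})
    (c : Module.Dual ℝ V) (hc : IsExtremalRayGen S' (push.dualMap c)) :
    IsExtremalRayGen S c := by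
  obtain ⟨hne, hmem, hext⟩ := hc
  have hinj : Function.Injective push.dualMap := by
    intro a b hab
    ext v
    obtain ⟨w, rfl⟩ := hsurj v
    exact congrFun (congrArg DFunLike.coe hab) w
  refine ⟨?_, ?_, ?_⟩
  · intro h; exact hne (by simp [h])
  · rw [hS]
    intro D hD
    have : c (push (pull D)) = c D := by
      have := congrFun (congrArg DFunLike.coe hid) D
      simp at this; rw [this]
    rw [← this]
    have := hmem
    rw [hS'] at this
    exact this (pull D) (hpull D hD)
  · intro v hv w hw ⟨t, ht, htv⟩
    rw [hS] at hv hw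
    have hv' : push.dualMap v ∈ S' := by
      rw [hS']; intro D' hD'; exact hv (push D') (hpush D' hD')
    have hw' : push.dualMap w ∈ S' := by
      rw [hS']; intro D' hD'; exact hw (push D') (hpush D' hD')
    have hsum : push.dualMap v + push.dualMap w = t • push.dualMap c := by
      rw [← map_add, htv, map_smul]
    obtain ⟨⟨s, hs, hvs⟩, ⟨r, hr, hwr⟩⟩ := hext _ hv' _ hw' ⟨t, ht, hsum⟩
    constructor
    · exact ⟨s, hs, hinj (by rw [hvs, map_smul])⟩
    · exact ⟨r, hr, hinj (by rw [hwr, map_smul])⟩
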